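/- arXiv:1102.3061 — 2 statements merged into one kernel-verified Lean document; each statement's English description precedes it below -/
import Mathlib

section
/- Let U : ℝ → ℝ be continuously differentiable, let D > 0, and let y_min ∈ ℝ be the unique global minimizer of U, i.e. U(y_min) < U(y) for every y ≠ y_min. If y : ℝ → ℝ is twice continuously differentiable on [0,1], satisfies the stationary equation 0 = −U′(y(x)) + D·y″(x) for every x ∈ [0,1], and satisfies the boundary conditions y(0) = y(1) = y_min, then y(x) = y_min for every x ∈ [0,1]. In other words, the uniform solution y ≡ y_min is the unique stationary solution. -/
/-!
Multiplying the equation by `y'` shows that the mechanical energy `D/2 · y'² - U(y)` is constant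
on `(0, 1)`. If `y` left `y_min`, then at a point `c` where `|y - y_min|` is maximal we would have
`y'(c) = 0`, so the energy equals `-U(y c)` and hence `U(y c) ≤ U(y t)` for every interior `t`.
Letting `t → 0` gives `U(y c) ≤ U(y_min)`, contradicting the strict minimality of `y_min`.
-/

open Set

noncomputable def stationaryEnergy (U : ℝ → ℝ) (D : ℝ) (y : ℝ → ℝ) (x : ℝ) : ℝ :=
  D / 2 * deriv y x ^ 2 - U (y x)

section Energy

variable {U y : ℝ → ℝ} {D : ℝ}

theorem hasDerivAt_stationaryEnergy {x : ℝ} (hU : DifferentiableAt ℝ U (y x))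
    (hy : DifferentiableAt ℝ y x) (hy' : DifferentiableAt ℝ (deriv y) x)
    (hstat : deriv U (y x) = D * deriv (deriv y) x) :
    HasDerivAt (stationaryEnergy U D y) 0 x := by
  have hkin := (hy'.hasDerivAt.fun_pow 2).const_mul (D / 2)
  have hpot := hU.hasDerivAt.comp x hy.hasDerivAt
  exact (hkin.sub hpot).congr_deriv (by rw [hstat]; push_cast; ring)

theorem stationaryEnergy_eq_of_isOpen {s : Set ℝ} (hs : IsOpen s) (hs' : IsPreconnected s)
    (hU : Differentiable ℝ U) (hy : ContDiffOn ℝ 2 y s)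
    (hstat : ∀ x ∈ s, deriv U (y x) = D * deriv (deriv y) x) {a b : ℝ} (ha : a ∈ s)
    (hb : b ∈ s) : stationaryEnergy U D y a = stationaryEnergy U D y b := by
  have hy' : DifferentiableOn ℝ (deriv y) s :=
    (hy.deriv_of_isOpen hs (m := 1) (by norm_num)).differentiableOn one_ne_zero
  have hE : ∀ x ∈ s, HasDerivAt (stationaryEnergy U D y) 0 x := fun x hx =>
    hasDerivAt_stationaryEnergy (hU _)
      ((hy.differentiableOn two_ne_zero).differentiableAt (hs.mem_nhds hx))
      (hy'.differentiableAt (hs.mem_nhds hx)) (hstat x hx)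
  exact hs.is_const_of_deriv_eq_zero hs'
    (fun x hx => (hE x hx).differentiableAt.differentiableWithinAt) (fun x hx => (hE x hx).deriv)
    ha hb

theorem potential_le_of_deriv_eq_zero {s : Set ℝ} (hD : 0 ≤ D) (hs : IsOpen s)
    (hs' : IsPreconnected s) (hU : Differentiable ℝ U) (hy : ContDiffOn ℝ 2 y s)
    (hstat : ∀ x ∈ s, deriv U (y x) = D * deriv (deriv y) x) {c t : ℝ} (hc : c ∈ s)
    (hyc : deriv y c = 0) (ht : t ∈ s) : U (y c) ≤ U (y t) := by
  have hE := stationaryEnergy_eq_of_isOpen hs hs' hU hy hstat hc ht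
  simp only [stationaryEnergy, hyc] at hE
  nlinarith [sq_nonneg (deriv y t)]

end Energy

theorem exists_mem_Ioo_ne_deriv_eq_zero {f : ℝ → ℝ} {a b m x : ℝ}
    (hf : ContinuousOn f (Icc a b)) (ha : f a = m) (hb : f b = m) (hx : x ∈ Icc a b)
    (hfx : f x ≠ m) : ∃ c ∈ Ioo a b, f c ≠ m ∧ deriv f c = 0 := by
  have hdist : ContinuousOn (fun t => |f t - m|) (Icc a b) := (hf.sub continuousOn_const).abs
  obtain ⟨c, hc, hmax⟩ := isCompact_Icc.exists_isMaxOn ⟨x, hx⟩ hdist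
  have hfc : f c ≠ m := by
    have hxc : |f x - m| ≤ |f c - m| := hmax hx
    intro h
    rw [h, sub_self, abs_zero] at hxc
    exact hfx (sub_eq_zero.1 (abs_nonpos_iff.1 hxc))
  have hcIoo : c ∈ Ioo a b :=
    ⟨hc.1.lt_of_ne (fun h => hfc (h ▸ ha)), hc.2.lt_of_ne (fun h => hfc (h ▸ hb))⟩
  -- A maximizer of `|f - m|` is an extremum of `f` itself, and `deriv f c = 0` at an extremum
  -- needs no differentiability (otherwise `deriv` is the junk value `0`).
  have hext : IsExtrOn f (Icc a b) c := by
    rcases hfc.lt_or_gt with hlt | hgt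
    · refine Or.inl fun t ht => show f c ≤ f t from ?_
      have : |f t - m| ≤ |f c - m| := hmax ht
      rw [abs_of_neg (sub_neg.2 hlt)] at this
      linarith [neg_abs_le (f t - m)]
    · refine Or.inr fun t ht => show f t ≤ f c from ?_
      have : |f t - m| ≤ |f c - m| := hmax ht
      rw [abs_of_pos (sub_pos.2 hgt)] at this
      linarith [le_abs_self (f t - m)]
  exact ⟨c, hcIoo, hfc, (hext.isLocalExtr (Icc_mem_nhds hcIoo.1 hcIoo.2)).deriv_eq_zero⟩

/-- **Theorem 1 (threshold saturation for the phenomenological model).**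
If `U` is continuously differentiable, `D > 0`, `y_min` is the unique global
minimizer of `U`, and `y` is a twice continuously differentiable solution on
`[0,1]` of the stationary equation `0 = -U'(y(x)) + D * y''(x)` with boundary
conditions `y 0 = y_min` and `y 1 = y_min`, then `y ≡ y_min` on `[0,1]`. -/
theorem stationary_solution_is_uniform
    (U : ℝ → ℝ) (hU : ContDiff ℝ 1 U)
    (D : ℝ) (hD : 0 < D)
    (y_min : ℝ) (hmin : ∀ z : ℝ, z ≠ y_min → U y_min < U z)
    (y : ℝ → ℝ) (hy : ContDiffOn ℝ 2 y (Set.Icc 0 1))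
    (hstat : ∀ x ∈ Set.Icc (0 : ℝ) 1,
      (0 : ℝ) = -(deriv U (y x)) + D * deriv (deriv y) x)
    (hb0 : y 0 = y_min) (hb1 : y 1 = y_min) :
    ∀ x ∈ Set.Icc (0 : ℝ) 1, y x = y_min := by
  intro x hx
  by_contra hne
  obtain ⟨c, hc, hyc, hy'c⟩ := exists_mem_Ioo_ne_deriv_eq_zero hy.continuousOn hb0 hb1 hx hne
  have hle : ∀ t ∈ Ioo (0 : ℝ) 1, U (y c) ≤ U (y t) := fun t ht =>
    potential_le_of_deriv_eq_zero hD.le isOpen_Ioo isPreconnected_Ioo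
      (hU.differentiable one_ne_zero) (hy.mono Ioo_subset_Icc_self)
      (fun s hs => by linarith [hstat s (Ioo_subset_Icc_self hs)]) hc hy'c ht
  have hUy : ContinuousWithinAt (fun t => U (y t)) (Ioo 0 1) 0 :=
    ((hU.continuous.comp_continuousOn hy.continuousOn) 0 (left_mem_Icc.2 zero_le_one)).mono
      Ioo_subset_Icc_self
  have hle0 : U (y c) ≤ U (y 0) :=
    ContinuousWithinAt.closure_le (f := fun _ => U (y c)) (g := fun t => U (y t))
      (by rw [closure_Ioo zero_ne_one]; exact left_mem_Icc.2 zero_le_one)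
      continuousWithinAt_const hUy hle
  exact (hmin _ hyc).not_ge (hb0 ▸ hle0)
end

section
/- Let U : ℝ → ℝ be continuously differentiable, let D > 0, let y_min ∈ ℝ, and let y : ℝ → ℝ be twice continuously differentiable on [0,1] satisfying 0 = −U′(y(x)) + D·y″(x) for every x ∈ [0,1] and y(0) = y_min. If x* ∈ (0,1) is a point at which y attains an extremum over [0,1] (so that y′(x*) = 0), then U(y(x*)) ≤ U(y_min). -/
/-!
Multiplying the equation by `y'` shows that the energy `D/2 · y'² - U(y)` is constant on
`[0, x*]`. Its kinetic part vanishes at the critical point `x*` and is nonnegative at `0`,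
so `-U(y x*) = D/2 · y'(0)² - U(y_min) ≥ -U(y_min)`.
-/

open Set Filter Topology

noncomputable def mechanicalEnergy (D : ℝ) (U y y' : ℝ → ℝ) (x : ℝ) : ℝ :=
  D / 2 * y' x ^ 2 - U (y x)

theorem hasDerivAt_mechanicalEnergy {D x a : ℝ} {U y y' : ℝ → ℝ}
    (hy : HasDerivAt y (y' x) x) (hy' : HasDerivAt y' a x) (hU : DifferentiableAt ℝ U (y x)) :
    HasDerivAt (mechanicalEnergy D U y y') (y' x * (D * a - deriv U (y x))) x := by
  refine (((hy'.pow 2).const_mul (D / 2)).sub (hU.hasDerivAt.comp x hy)).congr_deriv ?_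
  norm_num
  ring

theorem mechanicalEnergy_eq_of_stationary {D a b : ℝ} {U y y' y'' : ℝ → ℝ} (hab : a < b)
    (hU : Differentiable ℝ U) (hyc : ContinuousOn y (Icc a b)) (hy'c : ContinuousOn y' (Icc a b))
    (hy : ∀ x ∈ Ioo a b, HasDerivAt y (y' x) x) (hy' : ∀ x ∈ Ioo a b, HasDerivAt y' (y'' x) x)
    (hstat : ∀ x ∈ Ioo a b, D * y'' x = deriv U (y x)) :
    mechanicalEnergy D U y y' a = mechanicalEnergy D U y y' b := by
  have hcont : ContinuousOn (mechanicalEnergy D U y y') (Icc a b) :=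
    (continuousOn_const.mul (hy'c.pow 2)).sub (hU.continuous.comp_continuousOn hyc)
  obtain ⟨c, -, hc⟩ := exists_hasDerivAt_eq_slope _ (fun _ => 0) hab hcont fun x hx => by
    simpa [hstat x hx] using hasDerivAt_mechanicalEnergy (D := D) (hy x hx) (hy' x hx) (hU _)
  rw [eq_comm, ← sub_eq_zero]
  exact (div_eq_zero_iff.mp hc.symm).resolve_right (sub_ne_zero.mpr hab.ne')

theorem ContDiffOn.hasDerivAt_derivWithin {y : ℝ → ℝ} {s : Set ℝ} {x : ℝ}
    (hy : ContDiffOn ℝ 1 y s) (hx : s ∈ 𝓝 x) : HasDerivAt y (derivWithin y s x) x :=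
  ((hy.differentiableOn one_ne_zero x (mem_of_mem_nhds hx)).hasDerivWithinAt).hasDerivAt hx

theorem ContDiffOn.hasDerivAt_derivWithin_deriv_deriv {y : ℝ → ℝ} {s : Set ℝ} {x : ℝ}
    (hy : ContDiffOn ℝ 2 y s) (hs : UniqueDiffOn ℝ s) (hx : s ∈ 𝓝 x) :
    HasDerivAt (derivWithin y s) (deriv (deriv y) x) x := by
  have hderiv : derivWithin y s =ᶠ[𝓝 x] deriv y := by
    filter_upwards [eventually_mem_nhds_iff.mpr hx] with z hz
    exact derivWithin_of_mem_nhds hz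
  rw [← hderiv.deriv_eq]
  exact ((hy.derivWithin hs le_rfl).hasDerivAt_derivWithin hx).congr_deriv
    (derivWithin_of_mem_nhds hx)

/-- **Key step in the proof of Theorem 1.**
If `U` is continuously differentiable, `D > 0`, and `y` is a twice
continuously differentiable solution on `[0,1]` of the stationary equation
`0 = -U'(y(x)) + D * y''(x)` with `y 0 = y_min`, then at any interior point
`x* ∈ (0,1)` at which `y` attains an extremum over `[0,1]` (so that
`y'(x*) = 0`), the potential satisfies `U (y x*) ≤ U y_min`. -/
theorem potential_at_interior_extremum_le
    (U : ℝ → ℝ) (hU : ContDiff ℝ 1 U)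
    (D : ℝ) (hD : 0 < D)
    (y_min : ℝ)
    (y : ℝ → ℝ) (hy : ContDiffOn ℝ 2 y (Set.Icc 0 1))
    (hstat : ∀ x ∈ Set.Icc (0 : ℝ) 1,
      (0 : ℝ) = -(deriv U (y x)) + D * deriv (deriv y) x)
    (hb0 : y 0 = y_min)
    (xstar : ℝ) (hx : xstar ∈ Set.Ioo (0 : ℝ) 1)
    (hext : IsMaxOn y (Set.Icc 0 1) xstar ∨ IsMinOn y (Set.Icc 0 1) xstar) :
    U (y xstar) ≤ U y_min := by
  set s := Icc (0 : ℝ) 1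
  have hs : UniqueDiffOn ℝ s := uniqueDiffOn_Icc zero_lt_one
  have hsub : Icc 0 xstar ⊆ s := Icc_subset_Icc_right hx.2.le
  have hnhds : ∀ x ∈ Ioo 0 xstar, s ∈ 𝓝 x := fun x hx' => Icc_mem_nhds hx'.1 (hx'.2.trans hx.2)
  have hconserved : mechanicalEnergy D U y (derivWithin y s) 0 =
      mechanicalEnergy D U y (derivWithin y s) xstar :=
    mechanicalEnergy_eq_of_stationary hx.1 (hU.differentiable one_ne_zero)
      (hy.continuousOn.mono hsub) ((hy.continuousOn_derivWithin hs one_le_two).mono hsub)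
      (fun x hx' => (hy.of_le one_le_two).hasDerivAt_derivWithin (hnhds x hx'))
      (fun x hx' => hy.hasDerivAt_derivWithin_deriv_deriv hs (hnhds x hx'))
      (fun x hx' => by linarith [hstat x (hsub (Ioo_subset_Icc_self hx'))])
  have hcrit : derivWithin y s xstar = 0 :=
    (IsExtrOn.isLocalExtr hext.symm (Icc_mem_nhds hx.1 hx.2)).hasDerivAt_eq_zero
      ((hy.of_le one_le_two).hasDerivAt_derivWithin (Icc_mem_nhds hx.1 hx.2))
  have hkinetic : 0 ≤ D / 2 * derivWithin y s 0 ^ 2 := by positivity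
  simp only [mechanicalEnergy, hcrit, hb0] at hconserved
  linarith
end
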